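/- arXiv:2203.12765 — 4 statements merged into one kernel-verified Lean document; each statement's English description precedes it below -/
import Mathlib

section
/- Let (X,‖·‖,τ) satisfy the standard assumptions and the dual assumptions, with (X,γ) a Mazur space for γ=γ(‖·‖,τ), and let (T(t))_{t≥0} be a τ-bi-continuous semigroup on X. Define ‖x‖^• := sup{|⟨x^•, x⟩| : x^• ∈ X^•, ‖x^•‖_{X'} ≤ 1}. Then ‖·‖^• is a norm on X equivalent to ‖·‖; more precisely ‖x‖^• ≤ ‖x‖ ≤ M‖x‖^• where M = limsup_{t→0+}‖T(t)‖_{L(X)}. -/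
noncomputable section

open Filter Topology MeasureTheory

/-- The norm dual `X' = X →L[ℂ] ℂ` of `X` (with the operator norm); the topology on `X`
here is the norm topology, irrespective of any other topology in scope. -/
abbrev wDual (X : Type*) [NormedAddCommGroup X] [NormedSpace ℂ X] : Type _ := X →L[ℂ] ℂ

/-- The space `L(X)` of bounded operators on `X` (with respect to the norm). -/
abbrev bOp (X : Type*) [NormedAddCommGroup X] [NormedSpace ℂ X] : Type _ := X →L[ℂ] X


/-- Composition `f ∘ R` of a functional with an operator (the dual action). -/
abbrev dualComp {X : Type*} [NormedAddCommGroup X] [NormedSpace ℂ X]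
    (f : wDual X) (R : bOp X) : wDual X := ContinuousLinearMap.comp f R

/-- Composition of bounded operators. -/
abbrev opComp {X : Type*} [NormedAddCommGroup X] [NormedSpace ℂ X]
    (R S : bOp X) : bOp X := ContinuousLinearMap.comp R S

/-- A sequence is Cauchy with respect to a given (group) topology `t`. -/
def SeqCauchyIn {X : Type*} [AddCommGroup X] (t : TopologicalSpace X) (u : ℕ → X) : Prop :=
  ∀ U ∈ @nhds X t 0, ∃ N : ℕ, ∀ m ≥ N, ∀ n ≥ N, u m - u n ∈ U

/-- The standard assumptions on a triple `(X, ‖·‖, τ)`: `τ` is a coarser Hausdorff locally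
convex vector topology, sequentially complete on norm-bounded sets, and the `τ`-dual is
norming for `X`. -/
structure StdAssumptions (X : Type*) [NormedAddCommGroup X] [NormedSpace ℂ X]
    (τ : TopologicalSpace X) : Prop where
  coarser : (UniformSpace.toTopologicalSpace : TopologicalSpace X) ≤ τ
  t2 : @T2Space X τ
  addGroup : @IsTopologicalAddGroup X τ _
  contSMul : @ContinuousSMul ℂ X _ _ τ
  locallyConvex : @LocallyConvexSpace ℝ X _ _ _ _ τ
  seqComplete : ∀ u : ℕ → X, (∃ C, ∀ n, ‖u n‖ ≤ C) → SeqCauchyIn τ u →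
    ∃ l : X, Filter.Tendsto u Filter.atTop (@nhds X τ l)
  norming : ∀ x : X,
    IsLUB {r : ℝ | ∃ f : wDual X, @Continuous X ℂ τ _ ⇑f ∧ ‖f‖ ≤ 1 ∧ r = ‖f x‖} ‖x‖

/-- `γ` is the mixed topology `γ(‖·‖, τ)`: the finest linear topology agreeing with `τ` on
norm-bounded sets and lying between `τ` and the norm topology. -/
structure IsMixedTopology (X : Type*) [NormedAddCommGroup X] [NormedSpace ℂ X]
    (τ γ : TopologicalSpace X) : Prop where
  le_tau : γ ≤ τ
  norm_le : (UniformSpace.toTopologicalSpace : TopologicalSpace X) ≤ γ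
  addGroup : @IsTopologicalAddGroup X γ _
  contSMul : @ContinuousSMul ℂ X _ _ γ
  agrees : ∀ B : Set X, Bornology.IsBounded B →
    TopologicalSpace.induced ((↑) : B → X) γ = TopologicalSpace.induced ((↑) : B → X) τ
  finest : ∀ γ' : TopologicalSpace X, @IsTopologicalAddGroup X γ' _ →
    @ContinuousSMul ℂ X _ _ γ' →
    (UniformSpace.toTopologicalSpace : TopologicalSpace X) ≤ γ' → γ' ≤ τ →
    (∀ B : Set X, Bornology.IsBounded B →
      TopologicalSpace.induced ((↑) : B → X) γ' = TopologicalSpace.induced ((↑) : B → X) τ) →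
    γ ≤ γ'

/-- A topology `t` on `X` makes `X` a Mazur space if every `t`-sequentially continuous linear
functional is `t`-continuous. -/
def MazurIn (X : Type*) [NormedAddCommGroup X] [NormedSpace ℂ X]
    (t : TopologicalSpace X) : Prop :=
  ∀ f : X →ₗ[ℂ] ℂ,
    (∀ (u : ℕ → X) (x : X), Filter.Tendsto u Filter.atTop (@nhds X t x) →
      Filter.Tendsto (fun n => f (u n)) Filter.atTop (nhds (f x))) →
    @Continuous X ℂ t _ ⇑f

/-- A `τ`-bi-continuous semigroup on `X`. -/
structure BiContinuousSemigroup (X : Type*) [NormedAddCommGroup X] [NormedSpace ℂ X]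
    (τ : TopologicalSpace X) where
  T : ℝ → bOp X
  map_zero : T 0 = 1
  map_add : ∀ s ≥ (0:ℝ), ∀ t ≥ (0:ℝ), T (s + t) = opComp (T s) (T t)
  strongCont : ∀ x : X, @ContinuousOn ℝ X _ τ (fun t => T t x) (Set.Ici 0)
  expBounded : ∃ M ≥ (1:ℝ), ∃ ω : ℝ, ∀ t ≥ (0:ℝ), ‖T t‖ ≤ M * Real.exp (ω * t)
  biEquicont : ∀ (u : ℕ → X) (x : X), (∃ C, ∀ n, ‖u n‖ ≤ C) →
    Filter.Tendsto u Filter.atTop (@nhds X τ x) →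
    ∀ b ≥ (0:ℝ), ∀ U ∈ @nhds X τ (0:X), ∀ᶠ n in Filter.atTop,
      ∀ t ∈ Set.Icc (0:ℝ) b, T t (u n - x) ∈ U

/-- `X^∘`: the space of norm-continuous functionals that are `τ`-sequentially continuous on
norm-bounded sets. -/
def circDual (X : Type*) [NormedAddCommGroup X] [NormedSpace ℂ X]
    (τ : TopologicalSpace X) : Set (wDual X) :=
  {f | ∀ (u : ℕ → X) (x : X), (∃ C, ∀ n, ‖u n‖ ≤ C) →
    Filter.Tendsto u Filter.atTop (@nhds X τ x) →
    Filter.Tendsto (fun n => f (u n)) Filter.atTop (nhds (f x))}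

/-- The dual assumptions: `X^∘ ∩ B_{X'}` is sequentially `σ(X^∘,X)`-complete, and every
norm-bounded `σ(X^∘,X)`-null sequence in `X^∘` is `τ`-equicontinuous on norm-bounded sets. -/
structure DualAssumptions (X : Type*) [NormedAddCommGroup X] [NormedSpace ℂ X]
    (τ : TopologicalSpace X) : Prop where
  ballSeqComplete : ∀ u : ℕ → wDual X, (∀ n, u n ∈ circDual X τ) →
    (∀ n, ‖u n‖ ≤ 1) → (∀ x : X, CauchySeq fun n => u n x) →
    ∃ f ∈ circDual X τ, ‖f‖ ≤ 1 ∧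
      ∀ x : X, Filter.Tendsto (fun n => u n x) Filter.atTop (nhds (f x))
  equicont : ∀ u : ℕ → wDual X, (∀ n, u n ∈ circDual X τ) →
    (∃ C, ∀ n, ‖u n‖ ≤ C) →
    (∀ x : X, Filter.Tendsto (fun n => u n x) Filter.atTop (nhds 0)) →
    ∀ B : Set X, Bornology.IsBounded B → ∀ x₀ ∈ B, ∀ ε > 0,
      ∃ U ∈ @nhds X τ x₀, ∀ n, ∀ x ∈ B ∩ U, ‖u n x - u n x₀‖ < ε

/-- The bi-sun dual `X^•`: the part of `X^∘` on which the dual semigroup is norm-strongly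
continuous. -/
def sunDual {X : Type*} [NormedAddCommGroup X] [NormedSpace ℂ X] {τ : TopologicalSpace X}
    (S : BiContinuousSemigroup X τ) : Set (wDual X) :=
  {f | f ∈ circDual X τ ∧
    Filter.Tendsto (fun t : ℝ => dualComp f (S.T t))
      (nhdsWithin 0 (Set.Ioi 0)) (nhds f)}

/-- The subspace of norm-strong continuity of the semigroup. -/
def contSubspace {X : Type*} [NormedAddCommGroup X] [NormedSpace ℂ X] {τ : TopologicalSpace X}
    (S : BiContinuousSemigroup X τ) : Set X :=
  {x | Filter.Tendsto (fun t : ℝ => S.T t x) (nhdsWithin 0 (Set.Ioi 0)) (nhds x)}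

/-- The norm `‖x‖^• = sup { |⟨x^•, x⟩| : x^• ∈ X^•, ‖x^•‖ ≤ 1 }`. -/
def bulletNorm {X : Type*} [NormedAddCommGroup X] [NormedSpace ℂ X] {τ : TopologicalSpace X}
    (S : BiContinuousSemigroup X τ) (x : X) : ℝ :=
  sSup {r : ℝ | ∃ f ∈ sunDual S, ‖f‖ ≤ 1 ∧ r = ‖f x‖}

/-- The weak topology `σ(X, F)` on `X` induced by a set `F` of functionals. -/
def weakTop {X : Type*} [NormedAddCommGroup X] [NormedSpace ℂ X]
    (F : Set (wDual X)) : TopologicalSpace X :=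
  ⨅ f ∈ F, TopologicalSpace.induced (⇑f) inferInstance

/-- `(D, A)` is the generator of the `τ`-bi-continuous semigroup `S`. -/
def IsBiGenerator {X : Type*} [NormedAddCommGroup X] [NormedSpace ℂ X] {τ : TopologicalSpace X}
    (S : BiContinuousSemigroup X τ) (D : Set X) (A : X → X) : Prop :=
  (∀ x : X, x ∈ D ↔
    ((∃ y : X, Filter.Tendsto (fun t : ℝ => t⁻¹ • (S.T t x - x))
        (nhdsWithin 0 (Set.Ioi 0)) (@nhds X τ y)) ∧
      ∃ C : ℝ, ∀ t ∈ Set.Ioc (0:ℝ) 1, ‖S.T t x - x‖ ≤ C * t)) ∧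
  ∀ x ∈ D, Filter.Tendsto (fun t : ℝ => t⁻¹ • (S.T t x - x))
    (nhdsWithin 0 (Set.Ioi 0)) (@nhds X τ (A x))

/-- `l` lies in the resolvent set of `(D, A)` with resolvent operator `R = R(l, A)`. -/
def IsResolvent {X : Type*} [NormedAddCommGroup X] [NormedSpace ℂ X]
    (D : Set X) (A : X → X) (l : ℂ) (R : bOp X) : Prop :=
  (∀ x : X, R x ∈ D ∧ l • R x - A (R x) = x) ∧ ∀ x ∈ D, R (l • x - A x) = x

/-- `(Db, Ab)` is the generator of the strongly continuous semigroup `T^•` on `X^•`. -/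
def IsSunGenerator {X : Type*} [NormedAddCommGroup X] [NormedSpace ℂ X] {τ : TopologicalSpace X}
    (S : BiContinuousSemigroup X τ) (Db : Set (wDual X))
    (Ab : wDual X → wDual X) : Prop :=
  (∀ f : wDual X, f ∈ Db ↔ (f ∈ sunDual S ∧ ∃ g ∈ sunDual S,
    Filter.Tendsto (fun t : ℝ => t⁻¹ • (dualComp f (S.T t) - f))
      (nhdsWithin 0 (Set.Ioi 0)) (nhds g))) ∧
  ∀ f ∈ Db, Ab f ∈ sunDual S ∧
    Filter.Tendsto (fun t : ℝ => t⁻¹ • (dualComp f (S.T t) - f))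
      (nhdsWithin 0 (Set.Ioi 0)) (nhds (Ab f))

/-- The set `G_t` of Cesàro means `(1/t) ∫_0^t T(s) g ds`, `g ∈ G` (a Pettis integral,
characterized by pairing with all functionals in `X^∘`); `G_0 := G`. -/
def cesaroSet {X : Type*} [NormedAddCommGroup X] [NormedSpace ℂ X] {τ : TopologicalSpace X}
    (S : BiContinuousSemigroup X τ) (G : Set X) (t : ℝ) : Set X :=
  if t = 0 then G else
    {y | ∃ g ∈ G, ∀ f ∈ circDual X τ, f y = (t : ℂ)⁻¹ * ∫ s in (0:ℝ)..t, f (S.T s g)}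

/-- The Favard space of the semigroup: `{x : limsup_{t→0⁺} (1/t)‖T(t)x − x‖ < ∞}`. -/
def Favard {X : Type*} [NormedAddCommGroup X] [NormedSpace ℂ X] {τ : TopologicalSpace X}
    (S : BiContinuousSemigroup X τ) : Set X :=
  {x | ∃ C : ℝ, ∀ᶠ t in nhdsWithin (0:ℝ) (Set.Ioi 0), ‖S.T t x - x‖ ≤ C * t}

/-- `φ` is a bounded linear functional on the set `F` of functionals (viewed as an element
of the dual of the subspace `F`). -/
def BoundedLinearOn {X : Type*} [NormedAddCommGroup X] [NormedSpace ℂ X]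
    (F : Set (wDual X)) (φ : wDual X → ℂ) : Prop :=
  (∀ f ∈ F, ∀ g ∈ F, φ (f + g) = φ f + φ g) ∧
  (∀ (c : ℂ), ∀ f ∈ F, φ (c • f) = c * φ f) ∧
  ∃ C : ℝ, ∀ f ∈ F, ‖φ f‖ ≤ C * ‖f‖

/-- The growth bound `ω₀` of an (exponentially bounded) semigroup, as an extended real. -/
def growthBound {X : Type*} [NormedAddCommGroup X] [NormedSpace ℂ X]
    (T : ℝ → bOp X) : EReal :=
  sInf ((fun ω : ℝ => (ω : EReal)) ''
    {ω : ℝ | ∃ M ≥ (1:ℝ), ∀ t ≥ (0:ℝ), ‖T t‖ ≤ M * Real.exp (ω * t)})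

/-! For the upper bound it suffices, since the `τ`-dual is norming, to estimate `|f x|` for
`τ`-continuous `f`. The Cesàro means `φₜ = t⁻¹ ∫₀ᵗ f ∘ T(s) ds` belong to `X^•`: bi-continuity
makes them sequentially `τ`-continuous on norm-bounded sets, and `‖φₜ ∘ T(r) - φₜ‖ = O(r / t)`
because `φₜ ∘ T(r) - φₜ` only sees the two end pieces of length `r`. Moreover
`‖φₜ‖ ≤ ‖f‖ sup_{0<s≤t} ‖T(s)‖` and `φₜ x → f x` as `t → 0⁺`, so
`|f x| ≤ ‖f‖ · limsup_{t→0⁺} ‖T(t)‖ · ‖x‖^•`. -/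

open Set

theorem tendsto_inv_smul_intervalIntegral_nhdsGT {E : Type*} [NormedAddCommGroup E]
    [NormedSpace ℝ E] [CompleteSpace E] {g : ℝ → E} {a : ℝ} (hg : ContinuousOn g (Ici a)) :
    Tendsto (fun t => (t - a)⁻¹ • ∫ s in a..t, g s) (𝓝[>] a) (𝓝 (g a)) := by
  have hderiv : HasDerivWithinAt (fun t => ∫ s in a..t, g s) (g a) (Ici a) a :=
    intervalIntegral.integral_hasDerivWithinAt_right IntervalIntegrable.refl
      ((hg.mono Ioi_subset_Ici_self).stronglyMeasurableAtFilter_nhdsWithin measurableSet_Ioi a)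
      ((hg a self_mem_Ici).mono Ioi_subset_Ici_self)
  rw [hasDerivWithinAt_iff_tendsto_slope, Ici_sdiff_left] at hderiv
  exact hderiv.congr fun t => by simp [slope_def_module]

theorem norm_inv_smul_intervalIntegral_le {E : Type*} [NormedAddCommGroup E] [NormedSpace ℝ E]
    {g : ℝ → E} {t C : ℝ} (ht : 0 < t) (hg : ∀ s ∈ Ioc 0 t, ‖g s‖ ≤ C) :
    ‖t⁻¹ • ∫ s in 0..t, g s‖ ≤ C := by
  have hint : ‖∫ s in 0..t, g s‖ ≤ C * |t - 0| :=
    intervalIntegral.norm_integral_le_of_norm_le_const fun s hs =>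
      hg s (by rwa [uIoc_of_le ht.le] at hs)
  rw [norm_smul, Real.norm_of_nonneg (inv_nonneg.2 ht.le)]
  calc t⁻¹ * ‖∫ s in 0..t, g s‖ ≤ t⁻¹ * (C * |t - 0|) := by gcongr
    _ = C := by rw [sub_zero, abs_of_pos ht]; field_simp

section bulletNorm

variable {X : Type*} [NormedAddCommGroup X] [NormedSpace ℂ X] {τ : TopologicalSpace X}
  (S : BiContinuousSemigroup X τ)

theorem smul_mem_sunDual (c : ℂ) {φ : wDual X} (hφ : φ ∈ sunDual S) : c • φ ∈ sunDual S := by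
  refine ⟨fun u x hu hux => ?_, ?_⟩
  · simpa only [smul_apply, smul_eq_mul] using (hφ.1 u x hu hux).const_mul c
  · simpa only [dualComp, ContinuousLinearMap.smul_comp] using hφ.2.const_smul c

theorem norm_mem_upperBounds_bulletNorm (x : X) :
    ‖x‖ ∈ upperBounds {r : ℝ | ∃ φ ∈ sunDual S, ‖φ‖ ≤ 1 ∧ r = ‖φ x‖} :=
  fun _ ⟨φ, _, hφ1, hr⟩ => hr ▸ (φ.le_of_opNorm_le hφ1 x).trans_eq (one_mul _)

theorem bulletNorm_le_norm (x : X) : bulletNorm S x ≤ ‖x‖ :=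
  Real.sSup_le (norm_mem_upperBounds_bulletNorm S x) (norm_nonneg x)

theorem bulletNorm_nonneg (x : X) : 0 ≤ bulletNorm S x :=
  Real.sSup_nonneg fun _ ⟨_, _, _, hr⟩ => hr ▸ norm_nonneg _

theorem norm_apply_le_bulletNorm {φ : wDual X} (hφ : φ ∈ sunDual S) (hφ1 : ‖φ‖ ≤ 1) (x : X) :
    ‖φ x‖ ≤ bulletNorm S x :=
  le_csSup ⟨‖x‖, norm_mem_upperBounds_bulletNorm S x⟩ ⟨φ, hφ, hφ1, rfl⟩

theorem norm_apply_le_norm_mul_bulletNorm {φ : wDual X} (hφ : φ ∈ sunDual S) (x : X) :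
    ‖φ x‖ ≤ ‖φ‖ * bulletNorm S x := by
  rcases eq_or_ne φ 0 with rfl | hφ0
  · simp
  have hnorm : 0 < ‖φ‖ := norm_pos_iff.2 hφ0
  have hunit := norm_apply_le_bulletNorm S (smul_mem_sunDual S ((‖φ‖⁻¹ : ℝ) : ℂ) hφ)
    (by rw [norm_smul, Complex.norm_real, norm_inv, norm_norm, inv_mul_cancel₀ hnorm.ne']) x
  rw [smul_apply, norm_smul, Complex.norm_real, norm_inv, norm_norm] at hunit
  rwa [inv_mul_le_iff₀ hnorm] at hunit

end bulletNorm

namespace BiContinuousSemigroup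

variable {X : Type*} [NormedAddCommGroup X] [NormedSpace ℂ X] {τ : TopologicalSpace X}
  (S : BiContinuousSemigroup X τ)

theorem exists_norm_le (b : ℝ) : ∃ C, ∀ s ∈ Icc 0 b, ‖S.T s‖ ≤ C := by
  obtain ⟨M, hM, ω, hMω⟩ := S.expBounded
  refine ⟨M * Real.exp (|ω| * b), fun s hs => (hMω s hs.1).trans ?_⟩
  gcongr M * Real.exp ?_
  calc ω * s ≤ |ω| * s := by gcongr; exacts [hs.1, le_abs_self ω]
    _ ≤ |ω| * b := by gcongr; exact hs.2

theorem isBoundedUnder_norm_nhdsGT :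
    IsBoundedUnder (· ≤ ·) (𝓝[>] 0) (fun t => ‖S.T t‖) := by
  obtain ⟨C, hC⟩ := S.exists_norm_le 1
  refine ⟨C, eventually_map.2 ?_⟩
  filter_upwards [Ioo_mem_nhdsGT zero_lt_one] with s hs
  exact hC s (Ioo_subset_Icc_self hs)

theorem limsup_norm_nonneg : 0 ≤ limsup (fun t => ‖S.T t‖) (𝓝[>] 0) :=
  le_limsup_of_frequently_le (Frequently.of_forall fun _ => norm_nonneg _)
    S.isBoundedUnder_norm_nhdsGT

theorem norm_apply_apply_le (f : wDual X) (x : X) {s c : ℝ} (hs : ‖S.T s‖ ≤ c) :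
    ‖f (S.T s x)‖ ≤ ‖f‖ * c * ‖x‖ :=
  calc ‖f (S.T s x)‖ ≤ ‖f‖ * (‖S.T s‖ * ‖x‖) := f.le_opNorm_of_le ((S.T s).le_opNorm x)
    _ ≤ ‖f‖ * c * ‖x‖ := by rw [← mul_assoc]; gcongr

theorem norm_intervalIntegral_apply_le (f : wDual X) (x : X) {a b c : ℝ} (hab : a ≤ b)
    (hc : ∀ s ∈ Ioc a b, ‖S.T s‖ ≤ c) :
    ‖∫ s in a..b, f (S.T s x)‖ ≤ ‖f‖ * c * ‖x‖ * (b - a) := by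
  rw [← abs_of_nonneg (sub_nonneg.2 hab)]
  refine intervalIntegral.norm_integral_le_of_norm_le_const fun s hs => ?_
  rw [uIoc_of_le hab] at hs
  exact S.norm_apply_apply_le f x (hc s hs)

section cesaroMean

variable {f : wDual X}

theorem continuousOn_apply (hf : Continuous[τ, _] f) (x : X) :
    ContinuousOn (fun s => f (S.T s x)) (Ici 0) :=
  hf.comp_continuousOn (S.strongCont x)

theorem intervalIntegrable_apply (hf : Continuous[τ, _] f) (x : X) {a b : ℝ} (ha : 0 ≤ a)
    (hb : 0 ≤ b) :
    IntervalIntegrable (fun s => f (S.T s x)) volume a b :=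
  ((S.continuousOn_apply hf x).mono fun _ hs => (le_inf ha hb).trans hs.1).intervalIntegrable

variable (hf : Continuous[τ, _] f) {t : ℝ} (ht : 0 < t)

def cesaroMean : wDual X :=
  LinearMap.mkContinuousOfExistsBound
    { toFun := fun x => t⁻¹ • ∫ s in 0..t, f (S.T s x)
      map_add' := fun x y => by
        rw [← smul_add, ← intervalIntegral.integral_add
          (S.intervalIntegrable_apply hf x le_rfl ht.le)
          (S.intervalIntegrable_apply hf y le_rfl ht.le)]
        simp only [ContinuousLinearMap.map_add]
      map_smul' := fun c x => by
        simp only [map_smul, smul_eq_mul, intervalIntegral.integral_const_mul, RingHom.id_apply]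
        exact (mul_smul_comm _ _ _).symm }
    (let ⟨C, hC⟩ := S.exists_norm_le t
     ⟨‖f‖ * C, fun x => norm_inv_smul_intervalIntegral_le ht fun s hs =>
       S.norm_apply_apply_le f x (hC s (Ioc_subset_Icc_self hs))⟩)

theorem cesaroMean_apply (x : X) :
    S.cesaroMean hf ht x = t⁻¹ • ∫ s in 0..t, f (S.T s x) := rfl

theorem norm_cesaroMean_le {c : ℝ} (hc : ∀ s ∈ Ioc 0 t, ‖S.T s‖ ≤ c) :
    ‖S.cesaroMean hf ht‖ ≤ ‖f‖ * c :=
  ContinuousLinearMap.opNorm_le_bound _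
    (mul_nonneg (norm_nonneg f) ((norm_nonneg _).trans (hc t ⟨ht, le_rfl⟩))) fun x =>
      norm_inv_smul_intervalIntegral_le ht fun s hs => S.norm_apply_apply_le f x (hc s hs)

theorem cesaroMean_mem_circDual : S.cesaroMean hf ht ∈ circDual X τ := by
  intro u x hu hux
  rw [Metric.tendsto_atTop]
  intro ε hε
  have hball : f ⁻¹' Metric.ball 0 (ε / 2) ∈ @nhds X τ 0 :=
    hf.continuousAt.preimage_mem_nhds (by simpa using Metric.ball_mem_nhds (0 : ℂ) (half_pos hε))
  obtain ⟨N, hN⟩ := eventually_atTop.1 (S.biEquicont u x hu hux t ht.le _ hball)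
  refine ⟨N, fun n hn => ?_⟩
  rw [dist_eq_norm, ← map_sub, cesaroMean_apply]
  refine (norm_inv_smul_intervalIntegral_le ht fun s hs => ?_).trans_lt (half_lt_self hε)
  exact (mem_ball_zero_iff.1 (hN n hn s (Ioc_subset_Icc_self hs))).le

theorem cesaroMean_apply_T_sub {r : ℝ} (hr : 0 ≤ r) (x : X) :
    S.cesaroMean hf ht (S.T r x) - S.cesaroMean hf ht x =
      t⁻¹ • ((∫ s in t..t + r, f (S.T s x)) - ∫ s in 0..r, f (S.T s x)) := by
  have hshift : ∫ s in 0..t, f (S.T s (S.T r x)) = ∫ s in r..t + r, f (S.T s x) := by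
    calc ∫ s in 0..t, f (S.T s (S.T r x)) = ∫ s in 0..t, f (S.T (s + r) x) :=
          intervalIntegral.integral_congr fun s hs => by
            rw [uIcc_of_le ht.le] at hs
            rw [S.map_add s hs.1 r hr]
            rfl
      _ = ∫ s in r..t + r, f (S.T s x) := by
          simpa using
            intervalIntegral.integral_comp_add_right (a := 0) (b := t) (fun s => f (S.T s x)) r
  rw [cesaroMean_apply, cesaroMean_apply, hshift, ← smul_sub,
    intervalIntegral.integral_interval_sub_interval_comm'
      (S.intervalIntegrable_apply hf x hr (by positivity))
      (S.intervalIntegrable_apply hf x le_rfl ht.le) (S.intervalIntegrable_apply hf x hr le_rfl)]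

theorem norm_dualComp_cesaroMean_sub_le {r C : ℝ} (hr : 0 ≤ r)
    (hC : ∀ s ∈ Ioc 0 (t + r), ‖S.T s‖ ≤ C) :
    ‖dualComp (S.cesaroMean hf ht) (S.T r) - S.cesaroMean hf ht‖ ≤ 2 * ‖f‖ * C * r / t := by
  have hC0 : 0 ≤ C := (norm_nonneg _).trans (hC t ⟨ht, by linarith⟩)
  refine ContinuousLinearMap.opNorm_le_bound _ (by positivity) fun x => ?_
  have hfirst := S.norm_intervalIntegral_apply_le f x (a := t) (b := t + r) (by linarith)
    fun s hs => hC s ⟨ht.trans hs.1, hs.2⟩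
  have hsecond := S.norm_intervalIntegral_apply_le f x hr
    fun s hs => hC s ⟨hs.1, hs.2.trans (by linarith)⟩
  calc ‖S.cesaroMean hf ht (S.T r x) - S.cesaroMean hf ht x‖
      = t⁻¹ * ‖(∫ s in t..t + r, f (S.T s x)) - ∫ s in 0..r, f (S.T s x)‖ := by
        rw [S.cesaroMean_apply_T_sub hf ht hr, norm_smul, Real.norm_of_nonneg (by positivity)]
    _ ≤ t⁻¹ * (‖f‖ * C * ‖x‖ * (t + r - t) + ‖f‖ * C * ‖x‖ * (r - 0)) := by
        gcongr
        exact (norm_sub_le _ _).trans (add_le_add hfirst hsecond)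
    _ = 2 * ‖f‖ * C * r / t * ‖x‖ := by field_simp; ring

theorem tendsto_dualComp_cesaroMean :
    Tendsto (fun r => dualComp (S.cesaroMean hf ht) (S.T r)) (𝓝[>] 0)
      (𝓝 (S.cesaroMean hf ht)) := by
  obtain ⟨C, hC⟩ := S.exists_norm_le (t + 1)
  have hlin : Tendsto (fun r : ℝ => 2 * ‖f‖ * C * r / t) (𝓝[>] 0) (𝓝 0) := by
    refine tendsto_nhdsWithin_of_tendsto_nhds ?_
    simpa using ((continuous_const.mul continuous_id).div_const t).tendsto (0 : ℝ)
  rw [tendsto_iff_norm_sub_tendsto_zero]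
  refine squeeze_zero' (Eventually.of_forall fun _ => norm_nonneg _) ?_ hlin
  filter_upwards [Ioo_mem_nhdsGT zero_lt_one] with r hr
  exact S.norm_dualComp_cesaroMean_sub_le hf ht hr.1.le
    fun s hs => hC s ⟨hs.1.le, hs.2.trans (by linarith [hr.2])⟩

theorem cesaroMean_mem_sunDual : S.cesaroMean hf ht ∈ sunDual S :=
  ⟨S.cesaroMean_mem_circDual hf ht, S.tendsto_dualComp_cesaroMean hf ht⟩

end cesaroMean

theorem norm_apply_le_of_eventually_norm_le {f : wDual X} (hf : Continuous[τ, _] f) (x : X)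
    {c : ℝ} (hc : ∀ᶠ s in 𝓝[>] 0, ‖S.T s‖ ≤ c) : ‖f x‖ ≤ ‖f‖ * c * bulletNorm S x := by
  have hmean : Tendsto (fun t => t⁻¹ • ∫ s in 0..t, f (S.T s x)) (𝓝[>] 0) (𝓝 (f x)) := by
    simpa [S.map_zero] using tendsto_inv_smul_intervalIntegral_nhdsGT (S.continuousOn_apply hf x)
  obtain ⟨ε, hε, hcε⟩ := mem_nhdsGT_iff_exists_Ioo_subset.1 hc
  refine le_of_tendsto hmean.norm ?_
  filter_upwards [Ioo_mem_nhdsGT hε] with t ht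
  calc ‖t⁻¹ • ∫ s in 0..t, f (S.T s x)‖ = ‖S.cesaroMean hf ht.1 x‖ := rfl
    _ ≤ ‖S.cesaroMean hf ht.1‖ * bulletNorm S x :=
        norm_apply_le_norm_mul_bulletNorm S (S.cesaroMean_mem_sunDual hf ht.1) x
    _ ≤ ‖f‖ * c * bulletNorm S x := by
        gcongr
        · exact bulletNorm_nonneg S x
        · exact S.norm_cesaroMean_le hf ht.1 fun s hs => hcε ⟨hs.1, hs.2.trans_lt ht.2⟩

theorem norm_apply_le_limsup_mul_bulletNorm {f : wDual X} (hf : Continuous[τ, _] f) (x : X) :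
    ‖f x‖ ≤ ‖f‖ * limsup (fun t => ‖S.T t‖) (𝓝[>] 0) * bulletNorm S x := by
  set L := limsup (fun t => ‖S.T t‖) (𝓝[>] 0)
  have hlim :
      Tendsto (fun c => ‖f‖ * c * bulletNorm S x) (𝓝[>] L) (𝓝 (‖f‖ * L * bulletNorm S x)) :=
    ((continuous_const.mul continuous_id).mul continuous_const).tendsto L |>.mono_left
      nhdsWithin_le_nhds
  refine ge_of_tendsto hlim (eventually_nhdsWithin_of_forall fun c hc => ?_)
  exact S.norm_apply_le_of_eventually_norm_le hf x
    ((eventually_lt_of_limsup_lt hc S.isBoundedUnder_norm_nhdsGT).mono fun _ => le_of_lt)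

end BiContinuousSemigroup

theorem bulletNorm_equivalent_general
    {X : Type*} [NormedAddCommGroup X] [NormedSpace ℂ X]
    (τ : TopologicalSpace X)
    (hstd : StdAssumptions X τ)
    (S : BiContinuousSemigroup X τ) :
    ∀ x : X, bulletNorm S x ≤ ‖x‖ ∧
      ‖x‖ ≤ Filter.limsup (fun t : ℝ => ‖S.T t‖) (nhdsWithin 0 (Set.Ioi 0)) * bulletNorm S x := by
  intro x
  refine ⟨bulletNorm_le_norm S x, (hstd.norming x).2 ?_⟩
  rintro _ ⟨f, hf, hf1, rfl⟩
  calc ‖f x‖ ≤ ‖f‖ * (limsup (fun t => ‖S.T t‖) (𝓝[>] 0) * bulletNorm S x) := by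
        rw [← mul_assoc]; exact S.norm_apply_le_limsup_mul_bulletNorm hf x
    _ ≤ limsup (fun t => ‖S.T t‖) (𝓝[>] 0) * bulletNorm S x :=
        mul_le_of_le_one_left (mul_nonneg S.limsup_norm_nonneg (bulletNorm_nonneg S x)) hf1

theorem bulletNorm_equivalent
    {X : Type*} [NormedAddCommGroup X] [NormedSpace ℂ X] [CompleteSpace X]
    (τ : TopologicalSpace X)
    (hstd : StdAssumptions X τ) (hdual : DualAssumptions X τ)
    (γ : TopologicalSpace X) (hmix : IsMixedTopology X τ γ) (hmazur : MazurIn X γ)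
    (S : BiContinuousSemigroup X τ) :
    ∀ x : X, bulletNorm S x ≤ ‖x‖ ∧
      ‖x‖ ≤ Filter.limsup (fun t : ℝ => ‖S.T t‖) (nhdsWithin 0 (Set.Ioi 0)) * bulletNorm S x :=
  bulletNorm_equivalent_general τ hstd S

end
end

section
/- Under the standard and dual assumptions, let (T(t)) be τ-bi-continuous with generator A and let λ ∈ ρ(A) with R(λ,A)'(X^•) ⊆ D(A^•), where A^• generates the C₀-semigroup T^• on X^•. Then λ ∈ ρ(A^•) and R(λ,A^•) equals the restriction of R(λ,A)' to X^•. -/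
/-!
The resolvent identity is checked by pairing with `x ∈ X`. The generator `A^•` of the sun-dual
semigroup is computed pointwise as the limit of `f (t⁻¹ (T(t) x - x))`, and a functional in
`X^∘` can be passed through the `τ`-limit defining `A` because the difference quotients of
`x ∈ D(A)` are norm-bounded near `0`; hence `A^• f = f ∘ A` on `D(A)`. For `f ∘ R(λ, A)` one
needs this at every `x`, which follows since `R(λ, A)` commutes with `T(t)`: the semigroup
leaves `D(A)` invariant and commutes with `A` there, by the `τ`-continuity of `T(t)` on
norm-bounded sequences.
-/

noncomputable section

open Filter Topology MeasureTheory

section SeqContinuity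

variable {X : Type*} [Norm X] {τ : TopologicalSpace X}

def SeqContinuousOnBounded (τ : TopologicalSpace X) {Y : Type*} (tY : TopologicalSpace Y)
    (Φ : X → Y) : Prop :=
  ∀ (u : ℕ → X) (x : X), (∃ C, ∀ n, ‖u n‖ ≤ C) → Tendsto u atTop (@nhds X τ x) →
    Tendsto (fun n => Φ (u n)) atTop (@nhds Y tY (Φ x))

theorem SeqContinuousOnBounded.tendsto_comp {Y : Type*} {tY : TopologicalSpace Y} {Φ : X → Y}
    (hΦ : SeqContinuousOnBounded τ tY Φ) {ι : Type*} {l : Filter ι} [l.IsCountablyGenerated]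
    {g : ι → X} {y : X} {C : ℝ} (hg : Tendsto g l (@nhds X τ y)) (hC : ∀ᶠ i in l, ‖g i‖ ≤ C) :
    Tendsto (fun i => Φ (g i)) l (@nhds Y tY (Φ y)) := by
  refine tendsto_iff_seq_tendsto.2 fun s hs => ?_
  obtain ⟨C', hC'⟩ := (isBoundedUnder_of_eventually_le (hs.eventually hC)).bddAbove_range
  exact hΦ (g ∘ s) y ⟨C', fun n => hC' ⟨n, rfl⟩⟩ (hg.comp hs)

end SeqContinuity

section SemigroupDual

variable {X : Type*} [NormedAddCommGroup X] [NormedSpace ℂ X] {τ : TopologicalSpace X}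

theorem mem_circDual_iff_seqContinuousOnBounded {f : wDual X} :
    f ∈ circDual X τ ↔ SeqContinuousOnBounded τ inferInstance f :=
  Iff.rfl

namespace BiContinuousSemigroup

variable (S : BiContinuousSemigroup X τ)

abbrev diffQuot (t : ℝ) (x : X) : X := t⁻¹ • (S.T t x - x)

theorem seqContinuousOnBounded_T (hτ : @IsTopologicalAddGroup X τ _) {t : ℝ} (ht : 0 ≤ t) :
    SeqContinuousOnBounded τ τ (S.T t) := by
  intro u x hb hu
  rw [← @tendsto_sub_nhds_zero_iff X _ τ hτ]
  refine tendsto_def.2 fun U hU => ?_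
  filter_upwards [S.biEquicont u x hb hu t ht U hU] with n hn
  simpa only [Set.mem_preimage, map_sub] using hn t ⟨ht, le_rfl⟩

theorem T_comm {s t : ℝ} (hs : 0 ≤ s) (ht : 0 ≤ t) (x : X) :
    S.T s (S.T t x) = S.T t (S.T s x) := by
  have h := S.map_add s hs t ht
  rw [add_comm, S.map_add t ht s hs] at h
  exact (DFunLike.congr_fun h x).symm

theorem diffQuot_T {s t : ℝ} (hs : 0 ≤ s) (ht : 0 ≤ t) (x : X) :
    S.diffQuot s (S.T t x) = S.T t (S.diffQuot s x) := by
  simp only [diffQuot, S.T_comm hs ht, ContinuousLinearMap.map_smul_of_tower, map_sub]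

end BiContinuousSemigroup

variable {S : BiContinuousSemigroup X τ} {D : Set X} {A : X → X}

namespace IsBiGenerator

theorem eventually_norm_diffQuot_le (hgen : IsBiGenerator S D A) {x : X} (hx : x ∈ D) :
    ∃ C, ∀ᶠ t in 𝓝[>] (0 : ℝ), ‖S.diffQuot t x‖ ≤ C := by
  obtain ⟨C, hC⟩ := ((hgen.1 x).1 hx).2
  refine ⟨C, ?_⟩
  filter_upwards [Ioc_mem_nhdsGT one_pos] with t ht
  rw [norm_smul, norm_inv, Real.norm_of_nonneg ht.1.le, inv_mul_le_iff₀ ht.1, mul_comm]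
  exact hC t ht

theorem tendsto_map_diffQuot (hgen : IsBiGenerator S D A) {Y : Type*} {tY : TopologicalSpace Y}
    {Φ : X → Y} (hΦ : SeqContinuousOnBounded τ tY Φ) {x : X} (hx : x ∈ D) :
    Tendsto (fun t => Φ (S.diffQuot t x)) (𝓝[>] 0) (@nhds Y tY (Φ (A x))) :=
  let ⟨_, hC⟩ := hgen.eventually_norm_diffQuot_le hx
  hΦ.tendsto_comp (hgen.2 x hx) hC

theorem T_mem_and_commute (hgen : IsBiGenerator S D A) (hτ : @IsTopologicalAddGroup X τ _)
    (hT2 : @T2Space X τ) {t : ℝ} (ht : 0 ≤ t) {x : X} (hx : x ∈ D) :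
    S.T t x ∈ D ∧ A (S.T t x) = S.T t (A x) := by
  have hlim : Tendsto (fun s => S.diffQuot s (S.T t x)) (𝓝[>] 0) (@nhds X τ (S.T t (A x))) := by
    refine (hgen.tendsto_map_diffQuot (S.seqContinuousOnBounded_T hτ ht) hx).congr' ?_
    filter_upwards [self_mem_nhdsWithin] with s hs
    exact (S.diffQuot_T (le_of_lt hs) ht x).symm
  have hbound : ∃ C, ∀ s ∈ Set.Ioc (0 : ℝ) 1, ‖S.T s (S.T t x) - S.T t x‖ ≤ C * s := by
    obtain ⟨C, hC⟩ := ((hgen.1 x).1 hx).2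
    refine ⟨‖S.T t‖ * C, fun s hs => ?_⟩
    rw [S.T_comm hs.1.le ht, ← map_sub, mul_assoc]
    exact (S.T t).le_opNorm_of_le (hC s hs)
  have hmem : S.T t x ∈ D := (hgen.1 _).2 ⟨⟨_, hlim⟩, hbound⟩
  exact ⟨hmem, @tendsto_nhds_unique X ℝ τ hT2 _ _ _ _ _ (hgen.2 _ hmem) hlim⟩

end IsBiGenerator

namespace IsResolvent

variable {l : ℂ} {R : bOp X}

theorem apply_eq (hres : IsResolvent D A l R) (f : wDual X) (x : X) :
    l * f (R x) - f (A (R x)) = f x := by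
  simpa only [map_sub, map_smul, smul_eq_mul] using congrArg f (hres.1 x).2

theorem commute_T (hres : IsResolvent D A l R) (hgen : IsBiGenerator S D A)
    (hτ : @IsTopologicalAddGroup X τ _) (hT2 : @T2Space X τ) {t : ℝ} (ht : 0 ≤ t) (y : X) :
    R (S.T t y) = S.T t (R y) := by
  obtain ⟨hRy, hy⟩ := hres.1 y
  obtain ⟨hmem, hcomm⟩ := hgen.T_mem_and_commute hτ hT2 ht hRy
  calc R (S.T t y) = R (l • S.T t (R y) - A (S.T t (R y))) := by
        rw [hcomm, ← map_smul, ← map_sub, hy]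
    _ = S.T t (R y) := hres.2 _ hmem

theorem map_diffQuot (hres : IsResolvent D A l R) (hgen : IsBiGenerator S D A)
    (hτ : @IsTopologicalAddGroup X τ _) (hT2 : @T2Space X τ) {t : ℝ} (ht : 0 ≤ t) (x : X) :
    R (S.diffQuot t x) = S.diffQuot t (R x) := by
  simp only [BiContinuousSemigroup.diffQuot, ContinuousLinearMap.map_smul_of_tower, map_sub,
    hres.commute_T hgen hτ hT2 ht]

end IsResolvent

namespace IsSunGenerator

variable {Db : Set (wDual X)} {Ab : wDual X → wDual X}

theorem tendsto_apply_diffQuot (hsun : IsSunGenerator S Db Ab) {f : wDual X} (hf : f ∈ Db)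
    (x : X) : Tendsto (fun t => f (S.diffQuot t x)) (𝓝[>] 0) (𝓝 (Ab f x)) := by
  refine (((ContinuousLinearMap.apply ℂ ℂ x).continuous.tendsto _).comp
    (hsun.2 f hf).2).congr fun t => ?_
  simp [BiContinuousSemigroup.diffQuot]

theorem apply_eq_apply_biGenerator (hsun : IsSunGenerator S Db Ab) (hgen : IsBiGenerator S D A)
    {f : wDual X} (hf : f ∈ Db) {x : X} (hx : x ∈ D) : Ab f x = f (A x) :=
  tendsto_nhds_unique (hsun.tendsto_apply_diffQuot hf x)
    (hgen.tendsto_map_diffQuot (mem_circDual_iff_seqContinuousOnBounded.1 ((hsun.1 f).1 hf).1.1) hx)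

theorem apply_dualComp_resolvent (hsun : IsSunGenerator S Db Ab) (hgen : IsBiGenerator S D A)
    {l : ℂ} {R : bOp X} (hres : IsResolvent D A l R) (hτ : @IsTopologicalAddGroup X τ _)
    (hT2 : @T2Space X τ) {f : wDual X} (hf : f ∈ circDual X τ) (hfR : dualComp f R ∈ Db)
    (x : X) : Ab (dualComp f R) x = f (A (R x)) := by
  refine tendsto_nhds_unique (hsun.tendsto_apply_diffQuot hfR x) ?_
  refine (hgen.tendsto_map_diffQuot (mem_circDual_iff_seqContinuousOnBounded.1 hf)
    (hres.1 x).1).congr' ?_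
  filter_upwards [self_mem_nhdsWithin] with t ht
  exact congrArg f (hres.map_diffQuot hgen hτ hT2 (le_of_lt ht) x).symm

end IsSunGenerator

end SemigroupDual

theorem sun_resolvent_eq_restriction_general
    {X : Type*} [NormedAddCommGroup X] [NormedSpace ℂ X]
    (τ : TopologicalSpace X)
    (hstd : StdAssumptions X τ)
    (S : BiContinuousSemigroup X τ)
    (D : Set X) (A : X → X) (hgen : IsBiGenerator S D A)
    (Db : Set (wDual X)) (Ab : wDual X → wDual X) (hsun : IsSunGenerator S Db Ab)
    (l : ℂ) (R : bOp X) (hres : IsResolvent D A l R)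
    (hinv : ∀ f ∈ sunDual S, dualComp f R ∈ Db) :
    (∀ f ∈ sunDual S, l • dualComp f R - Ab (dualComp f R) = f) ∧
    ∀ f ∈ Db, dualComp (l • f - Ab f) R = f := by
  refine ⟨fun f hf => ?_, fun f hf => ?_⟩
  · refine DFunLike.ext _ _ fun x => ?_
    have hAbR := hsun.apply_dualComp_resolvent hgen hres hstd.addGroup hstd.t2 hf.1 (hinv f hf) x
    simpa [hAbR] using hres.apply_eq f x
  · refine DFunLike.ext _ _ fun x => ?_
    simpa [hsun.apply_eq_apply_biGenerator hgen hf (hres.1 x).1] using hres.apply_eq f x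

theorem sun_resolvent_eq_restriction
    {X : Type*} [NormedAddCommGroup X] [NormedSpace ℂ X] [CompleteSpace X]
    (τ : TopologicalSpace X)
    (hstd : StdAssumptions X τ) (hdual : DualAssumptions X τ)
    (S : BiContinuousSemigroup X τ)
    (D : Set X) (A : X → X) (hgen : IsBiGenerator S D A)
    (Db : Set (wDual X)) (Ab : wDual X → wDual X) (hsun : IsSunGenerator S Db Ab)
    (l : ℂ) (R : bOp X) (hres : IsResolvent D A l R)
    (hinv : ∀ f ∈ sunDual S, dualComp f R ∈ Db) :
    (∀ f ∈ sunDual S, l • dualComp f R - Ab (dualComp f R) = f) ∧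
    ∀ f ∈ Db, dualComp (l • f - Ab f) R = f :=
  sun_resolvent_eq_restriction_general τ hstd S D A hgen Db Ab hsun l R hres hinv

end
end

section
/- Under the standard and dual assumptions, let (T(t)) be a τ-bi-continuous semigroup on X with generator A and growth type |ω| with constant M (‖T(t)‖ ≤ Me^{|ω|t}). If H ⊆ X is norm-bounded by C, then for every λ ∈ ρ(A) and every γ-continuous seminorm p one has p(T(t)R(λ,A)h − R(λ,A)h) ≤ t·M·C·e^{|ω|t}·‖AR(λ,A)‖_{L(X)} for all t > 0, h ∈ H; hence R(λ,A)H is γ-(T(t))-equicontinuous at t = 0. -/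
noncomputable section

open Filter Topology MeasureTheory

/-! For `x ∈ D(A)` and a `τ`-continuous functional `f`, the orbit `s ↦ f (T(s) x)` has right
derivative `f (T(s) A x)`: the difference quotients of `x` are norm-bounded and `τ`-convergent, and
bi-equicontinuity lets `T(s)` pass through their limit. The mean value inequality and the norming
property of the `τ`-dual then give `‖T(t) x − x‖ ≤ t · sup_{s<t} ‖T(s)‖ · ‖A x‖`, applied to
`x = R(λ,A) h` with `A R(λ,A) = λ R(λ,A) − I`. Since the norm topology is finer than `γ`, the
estimate also gives the `γ`-equicontinuity. -/

namespace BiContinuousSemigroup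

variable {X : Type*} [NormedAddCommGroup X] [NormedSpace ℂ X] {τ : TopologicalSpace X}

theorem tendsto_apply_sub_of_eventually_norm_le (S : BiContinuousSemigroup X τ) {u : ℕ → X}
    {a : X} {C : ℝ} (hbdd : ∀ᶠ n in atTop, ‖u n‖ ≤ C) (hu : Tendsto u atTop (@nhds X τ a))
    {s : ℝ} (hs : 0 ≤ s) : Tendsto (fun n => S.T s (u n - a)) atTop (@nhds X τ 0) := by
  obtain ⟨N, hN⟩ := eventually_atTop.1 hbdd
  -- shifting by `N` makes the sequence bounded, as `biEquicont` requires
  refine (tendsto_add_atTop_iff_nat N).1 fun U hU => mem_map.2 ?_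
  exact (S.biEquicont (fun n => u (n + N)) a ⟨C, fun n => hN _ le_add_self⟩
    ((tendsto_add_atTop_iff_nat N).2 hu) s hs U hU).mono fun n hn => hn s ⟨hs, le_rfl⟩

end BiContinuousSemigroup

namespace IsBiGenerator

variable {X : Type*} [NormedAddCommGroup X] [NormedSpace ℂ X] {τ : TopologicalSpace X}
  {S : BiContinuousSemigroup X τ} {D : Set X} {A : X → X}

theorem tendsto_apply_diffQuotient (hgen : IsBiGenerator S D A) {x : X} (hx : x ∈ D)
    {f : wDual X} (hf : @Continuous X ℂ τ _ f) {s : ℝ} (hs : 0 ≤ s) :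
    Tendsto (fun r : ℝ => f (S.T s (r⁻¹ • (S.T r x - x)))) (𝓝[>] 0)
      (𝓝 (f (S.T s (A x)))) := by
  obtain ⟨Cx, hCx⟩ := ((hgen.1 x).1 hx).2
  rw [tendsto_iff_seq_tendsto]
  intro r hr
  have hr_mem : ∀ᶠ n in atTop, r n ∈ Set.Ioc 0 1 :=
    hr.eventually (Ioc_mem_nhdsGT one_pos)
  have hbdd : ∀ᶠ n in atTop, ‖(r n)⁻¹ • (S.T (r n) x - x)‖ ≤ Cx := by
    filter_upwards [hr_mem] with n hn
    rw [norm_smul, norm_inv, Real.norm_of_nonneg hn.1.le, inv_mul_le_iff₀ hn.1, mul_comm]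
    exact hCx _ hn
  have hτ := S.tendsto_apply_sub_of_eventually_norm_le hbdd ((hgen.2 x hx).comp hr) hs
  have hf0 := ((@Continuous.tendsto X ℂ τ _ f hf 0).comp hτ)
  simp only [map_zero, Function.comp_def, map_sub] at hf0
  exact tendsto_sub_nhds_zero_iff.1 hf0

theorem hasDerivWithinAt_apply_orbit (hgen : IsBiGenerator S D A) {x : X} (hx : x ∈ D)
    {f : wDual X} (hf : @Continuous X ℂ τ _ f) {s : ℝ} (hs : 0 ≤ s) :
    HasDerivWithinAt (fun r => f (S.T r x)) (f (S.T s (A x))) (Set.Ici s) s := by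
  rw [hasDerivWithinAt_iff_tendsto_slope, Set.Ici_sdiff_left]
  have hshift : Tendsto (fun r : ℝ => r - s) (𝓝[>] s) (𝓝[>] 0) :=
    tendsto_nhdsWithin_iff.2
      ⟨by simpa using ((continuous_sub_right s).tendsto s).mono_left nhdsWithin_le_nhds,
        eventually_nhdsWithin_of_forall fun _ hr => Set.mem_Ioi.2 (sub_pos.2 hr)⟩
  refine ((hgen.tendsto_apply_diffQuotient hx hf hs).comp hshift).congr' ?_
  filter_upwards [self_mem_nhdsWithin] with r (hr : s < r)
  have hT : S.T r = opComp (S.T s) (S.T (r - s)) := by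
    rw [← S.map_add s hs _ (sub_nonneg.2 hr.le), add_sub_cancel]
  simp [slope_def_module, hT]

theorem norm_dual_apply_sub_le (hgen : IsBiGenerator S D A) {x : X} (hx : x ∈ D)
    {f : wDual X} (hf : @Continuous X ℂ τ _ f) (hf1 : ‖f‖ ≤ 1) {t K : ℝ} (ht : 0 ≤ t)
    (hK : ∀ s ∈ Set.Ico 0 t, ‖S.T s‖ ≤ K) : ‖f (S.T t x - x)‖ ≤ K * ‖A x‖ * t := by
  have hcont : ContinuousOn (fun r => f (S.T r x)) (Set.Icc 0 t) :=
    (@Continuous.comp_continuousOn ℝ X ℂ _ τ _ f _ _ hf (S.strongCont x)).mono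
      Set.Icc_subset_Ici_self
  have hbound : ∀ s ∈ Set.Ico 0 t, ‖f (S.T s (A x))‖ ≤ K * ‖A x‖ := fun s hs =>
    calc ‖f (S.T s (A x))‖ ≤ ‖f‖ * (‖S.T s‖ * ‖A x‖) :=
          f.le_opNorm_of_le ((S.T s).le_opNorm _)
      _ ≤ 1 * (K * ‖A x‖) := by gcongr; exact hK s hs
      _ = K * ‖A x‖ := one_mul _
  have := norm_image_sub_le_of_norm_deriv_right_le_segment hcont
    (fun s hs => hgen.hasDerivWithinAt_apply_orbit hx hf hs.1) hbound t (Set.right_mem_Icc.2 ht)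
  rwa [S.map_zero, one_apply_eq_self, sub_zero, ← map_sub] at this

theorem norm_apply_sub_le (hgen : IsBiGenerator S D A) (hstd : StdAssumptions X τ) {x : X}
    (hx : x ∈ D) {t K : ℝ} (ht : 0 ≤ t) (hK : ∀ s ∈ Set.Ico 0 t, ‖S.T s‖ ≤ K) :
    ‖S.T t x - x‖ ≤ K * ‖A x‖ * t := by
  refine (hstd.norming _).2 ?_
  rintro _ ⟨f, hf, hf1, rfl⟩
  exact hgen.norm_dual_apply_sub_le hx hf hf1 ht hK

end IsBiGenerator

theorem IsResolvent.generator_resolvent_apply {X : Type*} [NormedAddCommGroup X] [NormedSpace ℂ X]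
    {D : Set X} {A : X → X} {l : ℂ} {R : bOp X} (hres : IsResolvent D A l R) (h : X) :
    A (R h) = (l • R - 1) h := by
  simpa only [sub_apply, smul_apply, one_apply_eq_self,
    (hres.1 h).2] using (sub_sub_self (l • R h) (A (R h))).symm

theorem resolvent_image_gamma_equicontinuous_general
    {X : Type*} [NormedAddCommGroup X] [NormedSpace ℂ X]
    (τ : TopologicalSpace X)
    (hstd : StdAssumptions X τ)
    (S : BiContinuousSemigroup X τ)
    (γ : TopologicalSpace X) (hmix : IsMixedTopology X τ γ)
    (D : Set X) (A : X → X) (hgen : IsBiGenerator S D A)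
    (M ω : ℝ) (hM : 1 ≤ M) (hMω : ∀ t ≥ (0:ℝ), ‖S.T t‖ ≤ M * Real.exp (|ω| * t))
    (l : ℂ) (R : bOp X) (hres : IsResolvent D A l R)
    (H : Set X) (C : ℝ) (hH : ∀ h ∈ H, ‖h‖ ≤ C)
    (p : Seminorm ℝ X) (hple : ∀ x : X, p x ≤ ‖x‖) :
    (∀ t > (0:ℝ), ∀ h ∈ H,
      p (S.T t (R h) - R h) ≤ t * M * C * Real.exp (|ω| * t) * ‖l • R - 1‖) ∧
    ∀ U ∈ @nhds X γ (0:X), ∃ δ > (0:ℝ), ∀ t ∈ Set.Ico (0:ℝ) δ, ∀ h ∈ H,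
      S.T t (R h) - R h ∈ U := by
  have hnorm : ∀ t > (0:ℝ), ∀ h ∈ H,
      ‖S.T t (R h) - R h‖ ≤ t * M * C * Real.exp (|ω| * t) * ‖l • R - 1‖ := by
    intro t ht h hh
    have hK : ∀ s ∈ Set.Ico 0 t, ‖S.T s‖ ≤ M * Real.exp (|ω| * t) := fun s hs =>
      (hMω s hs.1).trans (mul_le_mul_of_nonneg_left
        (Real.exp_le_exp.2 (mul_le_mul_of_nonneg_left hs.2.le (abs_nonneg ω))) (by linarith))
    calc ‖S.T t (R h) - R h‖ ≤ M * Real.exp (|ω| * t) * ‖A (R h)‖ * t :=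
          hgen.norm_apply_sub_le hstd (hres.1 h).1 ht.le hK
      _ ≤ M * Real.exp (|ω| * t) * (‖l • R - 1‖ * C) * t := by
          rw [hres.generator_resolvent_apply]
          gcongr
          exact (l • R - 1).le_opNorm_of_le (hH h hh)
      _ = t * M * C * Real.exp (|ω| * t) * ‖l • R - 1‖ := by ring
  refine ⟨fun t ht h hh => (hple _).trans (hnorm t ht h hh), fun U hU => ?_⟩
  obtain ⟨ε, hε, hball⟩ := Metric.mem_nhds_iff.1 (nhds_mono hmix.norm_le hU)
  have hsmall : Tendsto (fun t : ℝ => t * M * C * Real.exp (|ω| * t) * ‖l • R - 1‖)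
      (𝓝 0) (𝓝 0) :=
    (by fun_prop : Continuous fun t : ℝ => t * M * C * Real.exp (|ω| * t) * ‖l • R - 1‖).tendsto'
      0 0 (by simp)
  obtain ⟨δ, hδ, hδε⟩ := Metric.eventually_nhds_iff.1 (hsmall.eventually (gt_mem_nhds hε))
  refine ⟨δ, hδ, fun t ht h hh => hball ?_⟩
  rcases ht.1.eq_or_lt with rfl | ht0
  · simpa [S.map_zero] using Metric.mem_ball_self (x := (0 : X)) hε
  · rw [mem_ball_zero_iff]
    exact (hnorm t ht0 h hh).trans_lt
      (hδε (by rw [Real.dist_eq, sub_zero, abs_of_pos ht0]; exact ht.2))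

theorem resolvent_image_gamma_equicontinuous
    {X : Type*} [NormedAddCommGroup X] [NormedSpace ℂ X] [CompleteSpace X]
    (τ : TopologicalSpace X)
    (hstd : StdAssumptions X τ) (hdual : DualAssumptions X τ)
    (S : BiContinuousSemigroup X τ)
    (γ : TopologicalSpace X) (hmix : IsMixedTopology X τ γ)
    (D : Set X) (A : X → X) (hgen : IsBiGenerator S D A)
    (M ω : ℝ) (hM : 1 ≤ M) (hMω : ∀ t ≥ (0:ℝ), ‖S.T t‖ ≤ M * Real.exp (|ω| * t))
    (l : ℂ) (R : bOp X) (hres : IsResolvent D A l R)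
    (H : Set X) (C : ℝ) (hH : ∀ h ∈ H, ‖h‖ ≤ C)
    (p : Seminorm ℝ X) (hpcont : @Continuous X ℝ γ _ ⇑p) (hple : ∀ x : X, p x ≤ ‖x‖) :
    (∀ t > (0:ℝ), ∀ h ∈ H,
      p (S.T t (R h) - R h) ≤ t * M * C * Real.exp (|ω| * t) * ‖l • R - 1‖) ∧
    ∀ U ∈ @nhds X γ (0:X), ∃ δ > (0:ℝ), ∀ t ∈ Set.Ico (0:ℝ) δ, ∀ h ∈ H,
      S.T t (R h) - R h ∈ U :=
  resolvent_image_gamma_equicontinuous_general τ hstd S γ hmix D A hgen M ω hM hMω l R hres H C hH p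
    hple

end
end

section
/- Let (X,‖·‖,τ) satisfy the standard assumptions with mixed topology γ, let (T(t)) be a τ-bi-continuous semigroup with generator A, and let Y be a (T(t))-invariant, sequentially γ-closed linear subspace of X. Then the restricted semigroup (T(t)|_Y) is a τ|_Y-bi-continuous semigroup on Y and its generator is the part of A in Y with domain D(A) ∩ Y. -/
noncomputable section

open Filter Topology MeasureTheory

/-! A norm-bounded sequence converges in the mixed topology `γ` iff it converges for `τ`, so
sequentially `γ`-closed means closed under limits of norm-bounded `τ`-convergent sequences.
Invariance makes `T(t)|_Y` a semigroup of bounded operators on `Y` inheriting every estimate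
of `T`; since `τ|_Y` is induced, its limits are the `τ`-limits of the coerced functions. For
`y ∈ D(A) ∩ Y` the difference quotients `(T(t)y − y)/t` lie in `Y` and are norm-bounded for
`t ∈ (0,1]`, so their `τ`-limit `Ay` lies in `Y`: the domains agree and, `τ` being Hausdorff,
so do the generators. -/

def IsBddSeqClosed {X : Type*} [Norm X] (τ : TopologicalSpace X) (Y : Set X) : Prop :=
  ∀ (u : ℕ → X) (l : X), (∀ n, u n ∈ Y) → (∃ C, ∀ n, ‖u n‖ ≤ C) →
    Tendsto u atTop (@nhds X τ l) → l ∈ Y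

theorem IsBddSeqClosed.mem_of_tendsto {X : Type*} [Norm X] {τ : TopologicalSpace X} {Y : Set X}
    (hY : IsBddSeqClosed τ Y) {ι : Type*} {l : Filter ι} [l.IsCountablyGenerated] [l.NeBot]
    {f : ι → X} {z : X} {C : ℝ} (hfY : ∀ᶠ i in l, f i ∈ Y) (hfC : ∀ᶠ i in l, ‖f i‖ ≤ C)
    (hf : Tendsto f l (@nhds X τ z)) : z ∈ Y := by
  obtain ⟨s, hs, hsY⟩ := exists_seq_forall_of_frequently (hfY.and hfC).frequently
  exact hY (f ∘ s) z (fun n => (hsY n).1) ⟨C, fun n => (hsY n).2⟩ (hf.comp hs)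

section

variable {X : Type*} [NormedAddCommGroup X] [NormedSpace ℂ X]

/-- `T(t)` is only invariant for `t ≥ 0`; negative times are sent to `T(0)`. This section has
no topology on `X` in context: one would be found as the instance on `X` in place of the norm
topology. -/
def restrictFamily (T : ℝ → bOp X) (Y : Submodule ℂ X) (hY : ∀ t ≥ (0:ℝ), ∀ y ∈ Y, T t y ∈ Y)
    (t : ℝ) : bOp Y :=
  (T (max t 0)).restrict (hY _ (le_max_right t 0))

variable {T : ℝ → bOp X} {Y : Submodule ℂ X} {hY : ∀ t ≥ (0:ℝ), ∀ y ∈ Y, T t y ∈ Y}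

theorem restrictFamily_apply {t : ℝ} (ht : 0 ≤ t) (y : Y) :
    (restrictFamily T Y hY t y : X) = T t y := by
  simp [restrictFamily, max_eq_left ht]

theorem restrictFamily_zero (h0 : T 0 = 1) : restrictFamily T Y hY 0 = 1 := by
  ext y
  simp [restrictFamily_apply le_rfl, h0]

theorem restrictFamily_add {s t : ℝ} (hs : 0 ≤ s) (ht : 0 ≤ t)
    (hst : T (s + t) = (T s).comp (T t)) :
    restrictFamily T Y hY (s + t) = (restrictFamily T Y hY s).comp (restrictFamily T Y hY t) := by
  ext y
  simp [restrictFamily_apply, hs, ht, add_nonneg hs ht, hst]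

theorem norm_restrictFamily_le {t : ℝ} (ht : 0 ≤ t) :
    ‖restrictFamily T Y hY t‖ ≤ ‖T t‖ :=
  ContinuousLinearMap.opNorm_le_bound _ (norm_nonneg _) fun y => by
    simpa only [Submodule.coe_norm, restrictFamily_apply ht] using (T t).le_opNorm y

end

theorem tendsto_nhds_induced_iff {α β ι : Type*} {t : TopologicalSpace α} {f : β → α}
    {g : ι → β} {l : Filter ι} {b : β} :
    Tendsto g l (@nhds β (TopologicalSpace.induced f t) b) ↔
      Tendsto (f ∘ g) l (@nhds α t (f b)) := by
  rw [nhds_induced, tendsto_comap_iff]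

namespace BiContinuousSemigroup

variable {X : Type*} [NormedAddCommGroup X] [NormedSpace ℂ X] {τ : TopologicalSpace X}

def restrict (S : BiContinuousSemigroup X τ) (Y : Submodule ℂ X)
    (hY : ∀ t ≥ (0:ℝ), ∀ y ∈ Y, S.T t y ∈ Y) :
    BiContinuousSemigroup Y (TopologicalSpace.induced ((↑) : Y → X) τ) where
  T := restrictFamily S.T Y hY
  map_zero := restrictFamily_zero S.map_zero
  map_add s hs t ht := restrictFamily_add hs ht (S.map_add s hs t ht)
  strongCont y t ht := by
    refine tendsto_nhds_induced_iff.2 ?_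
    rw [Function.comp_def, restrictFamily_apply ht]
    exact (S.strongCont y t ht).congr'
      (eventuallyEq_nhdsWithin_of_eqOn fun s hs => (restrictFamily_apply hs y).symm)
  expBounded := by
    obtain ⟨M, hM, ω, hT⟩ := S.expBounded
    exact ⟨M, hM, ω, fun t ht => (norm_restrictFamily_le ht).trans (hT t ht)⟩
  biEquicont u y hu huy b hb U hU := by
    rw [nhds_induced] at hU
    obtain ⟨V, hV, hVU⟩ := hU
    filter_upwards [S.biEquicont (fun n => u n) y hu (tendsto_nhds_induced_iff.1 huy) b hb V hV]
      with n hn t ht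
    exact hVU (by simpa only [Set.mem_preimage, restrictFamily_apply ht.1,
      Submodule.coe_sub] using hn t ht)

theorem restrict_T_apply (S : BiContinuousSemigroup X τ) {Y : Submodule ℂ X}
    (hY : ∀ t ≥ (0:ℝ), ∀ y ∈ Y, S.T t y ∈ Y) {t : ℝ} (ht : 0 ≤ t) (y : Y) :
    ((S.restrict Y hY).T t y : X) = S.T t y :=
  restrictFamily_apply (hY := hY) ht y

end BiContinuousSemigroup

section Generator

variable {X : Type*} [NormedAddCommGroup X] [NormedSpace ℂ X] {τ : TopologicalSpace X}
  {S : BiContinuousSemigroup X τ} {Y : Submodule ℂ X}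
  {S' : BiContinuousSemigroup Y (TopologicalSpace.induced ((↑) : Y → X) τ)}

theorem coe_smul_sub_of_restrict (hS' : ∀ t ≥ (0:ℝ), ∀ y : Y, (S'.T t y : X) = S.T t y)
    {t : ℝ} (ht : 0 ≤ t) (y : Y) :
    ((t⁻¹ • (S'.T t y - y) : Y) : X) = t⁻¹ • (S.T t y - y) := by
  simp [hS' t ht]

theorem norm_sub_of_restrict (hS' : ∀ t ≥ (0:ℝ), ∀ y : Y, (S'.T t y : X) = S.T t y)
    {t : ℝ} (ht : 0 ≤ t) (y : Y) : ‖S'.T t y - y‖ = ‖S.T t y - y‖ := by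
  rw [← hS' t ht, ← Submodule.coe_sub]
  rfl

theorem tendsto_diffQuot_restrict_iff (hS' : ∀ t ≥ (0:ℝ), ∀ y : Y, (S'.T t y : X) = S.T t y)
    (y z : Y) :
    Tendsto (fun t : ℝ => t⁻¹ • (S'.T t y - y)) (𝓝[>] 0)
        (@nhds Y (TopologicalSpace.induced ((↑) : Y → X) τ) z) ↔
      Tendsto (fun t : ℝ => t⁻¹ • (S.T t y - y)) (𝓝[>] 0) (@nhds X τ z) := by
  rw [tendsto_nhds_induced_iff]
  exact tendsto_congr' (eventuallyEq_nhdsWithin_of_eqOn fun t ht =>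
    coe_smul_sub_of_restrict hS' (le_of_lt ht) y)

theorem mem_domain_restrict_iff (hS' : ∀ t ≥ (0:ℝ), ∀ y : Y, (S'.T t y : X) = S.T t y)
    (hY : IsBddSeqClosed τ (Y : Set X)) {D : Set X} {A : X → X} (hgen : IsBiGenerator S D A)
    {D' : Set Y} {A' : Y → Y} (hgen' : IsBiGenerator S' D' A') (y : Y) :
    y ∈ D' ↔ (y : X) ∈ D := by
  have hbound : ∀ C : ℝ, (∀ t ∈ Set.Ioc (0:ℝ) 1, ‖S'.T t y - y‖ ≤ C * t) ↔
      ∀ t ∈ Set.Ioc (0:ℝ) 1, ‖S.T t y - y‖ ≤ C * t := fun C =>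
    forall₂_congr fun t ht => by rw [norm_sub_of_restrict hS' ht.1.le]
  rw [hgen'.1 y, hgen.1 y]
  constructor
  · rintro ⟨⟨z, hz⟩, C, hC⟩
    exact ⟨⟨z, (tendsto_diffQuot_restrict_iff hS' y z).1 hz⟩, C, (hbound C).1 hC⟩
  · rintro ⟨⟨z, hz⟩, C, hC⟩
    have hzY : z ∈ Y := by
      refine hY.mem_of_tendsto (l := 𝓝[>] 0) (C := C) ?_ ?_ hz
      · filter_upwards [self_mem_nhdsWithin] with t ht
        rw [← coe_smul_sub_of_restrict hS' (le_of_lt ht) y]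
        exact Submodule.coe_mem _
      · filter_upwards [Ioc_mem_nhdsGT one_pos] with t ht
        rw [norm_smul, norm_inv, Real.norm_of_nonneg ht.1.le, inv_mul_le_iff₀ ht.1, mul_comm]
        exact hC t ht
    exact ⟨⟨⟨z, hzY⟩, (tendsto_diffQuot_restrict_iff hS' y ⟨z, hzY⟩).2 hz⟩, C, (hbound C).2 hC⟩

theorem coe_generator_restrict (hS' : ∀ t ≥ (0:ℝ), ∀ y : Y, (S'.T t y : X) = S.T t y)
    (hτ : @T2Space X τ) {D : Set X} {A : X → X} (hgen : IsBiGenerator S D A)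
    {D' : Set Y} {A' : Y → Y} (hgen' : IsBiGenerator S' D' A') {y : Y} (hy' : y ∈ D')
    (hy : (y : X) ∈ D) : (A' y : X) = A y :=
  haveI := hτ
  tendsto_nhds_unique ((tendsto_diffQuot_restrict_iff hS' y (A' y)).1 (hgen'.2 y hy'))
    (hgen.2 y hy)

end Generator

theorem restriction_to_invariant_subspace_general
    {X : Type*} [NormedAddCommGroup X] [NormedSpace ℂ X]
    (τ : TopologicalSpace X)
    (hstd : StdAssumptions X τ)
    (S : BiContinuousSemigroup X τ)
    (D : Set X) (A : X → X) (hgen : IsBiGenerator S D A)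
    (Y : Submodule ℂ X)
    (hinvY : ∀ t ≥ (0:ℝ), ∀ y ∈ Y, S.T t y ∈ Y)
    (hclosedY : ∀ (u : ℕ → X) (l : X), (∀ n, u n ∈ Y) → (∃ C, ∀ n, ‖u n‖ ≤ C) →
      Filter.Tendsto u Filter.atTop (@nhds X τ l) → l ∈ Y) :
    ∃ S' : BiContinuousSemigroup Y (TopologicalSpace.induced ((↑) : Y → X) τ),
      (∀ t ≥ (0:ℝ), ∀ y : Y, ((S'.T t y : X)) = S.T t (y : X)) ∧
      ∀ (D' : Set Y) (A' : Y → Y), IsBiGenerator S' D' A' →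
        (∀ y : Y, y ∈ D' ↔ (y : X) ∈ D) ∧ ∀ y ∈ D', ((A' y : X)) = A (y : X) := by
  have hS' : ∀ t ≥ (0:ℝ), ∀ y : Y, ((S.restrict Y hinvY).T t y : X) = S.T t y :=
    fun _ => S.restrict_T_apply hinvY
  refine ⟨S.restrict Y hinvY, hS', fun D' A' hgen' => ?_⟩
  have hD : ∀ y : Y, y ∈ D' ↔ (y : X) ∈ D :=
    mem_domain_restrict_iff hS' hclosedY hgen hgen'
  exact ⟨hD, fun y hy => coe_generator_restrict hS' hstd.t2 hgen hgen' hy ((hD y).1 hy)⟩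

/-- Restriction of a bi-continuous semigroup to an invariant, sequentially `γ`-closed
subspace: it is bi-continuous for the restricted topology and its generator is the part of
the generator, with domain `D(A) ∩ Y`. -/
theorem restriction_to_invariant_subspace
    {X : Type*} [NormedAddCommGroup X] [NormedSpace ℂ X] [CompleteSpace X]
    (τ : TopologicalSpace X)
    (hstd : StdAssumptions X τ)
    (S : BiContinuousSemigroup X τ)
    (D : Set X) (A : X → X) (hgen : IsBiGenerator S D A)
    (Y : Submodule ℂ X)
    (hinvY : ∀ t ≥ (0:ℝ), ∀ y ∈ Y, S.T t y ∈ Y)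
    (hclosedY : ∀ (u : ℕ → X) (l : X), (∀ n, u n ∈ Y) → (∃ C, ∀ n, ‖u n‖ ≤ C) →
      Filter.Tendsto u Filter.atTop (@nhds X τ l) → l ∈ Y) :
    ∃ S' : BiContinuousSemigroup Y (TopologicalSpace.induced ((↑) : Y → X) τ),
      (∀ t ≥ (0:ℝ), ∀ y : Y, ((S'.T t y : X)) = S.T t (y : X)) ∧
      ∀ (D' : Set Y) (A' : Y → Y), IsBiGenerator S' D' A' →
        (∀ y : Y, y ∈ D' ↔ (y : X) ∈ D) ∧ ∀ y ∈ D', ((A' y : X)) = A (y : X) :=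
  restriction_to_invariant_subspace_general τ hstd S D A hgen Y hinvY hclosedY

end
end
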